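/- arXiv:2301.01972 — 2 statements merged into one kernel-verified Lean document; each statement's English description precedes it below -/
import Mathlib

section
/- For any graph G, the function λ ↦ P_G(λ) counting proper colorings with at most λ colors agrees with a polynomial in λ with integer coefficients. -/
/-- The number of proper colorings of `G` with at most `k` colors. -/
noncomputable def properCount {V : Type*} (G : SimpleGraph V) (k : ℕ) : ℕ :=
  Nat.card {c : V → Fin k // ∀ v w : V, G.Adj v w → c v ≠ c w}

open Finset SimpleGraph Polynomial

/-- Constancy on adjacent vertices extends along walks. -/
private lemma const_of_walk {V : Type*} {H : SimpleGraph V} {β : Type*} {c : V → β}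
    (h : ∀ v w : V, H.Adj v w → c v = c w) :
    ∀ (v w : V) (p : H.Walk v w), c v = c w := by
  intro v w p
  induction p with
  | nil => rfl
  | cons ha _ ih => exact (h _ _ ha).trans ih

/-- Counting colorings monochromatic on a set of non-diagonal edges. -/
private lemma card_mono_colorings {V : Type*} [Fintype V] (k : ℕ) (S : Finset (Sym2 V))
    (hS : ∀ e ∈ S, ¬ e.IsDiag) :
    Nat.card {c : V → Fin k // ∀ e ∈ S, (e.map c).IsDiag}
      = k ^ Nat.card (SimpleGraph.fromEdgeSet (S : Set (Sym2 V))).ConnectedComponent := by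
  classical
  set H := SimpleGraph.fromEdgeSet (S : Set (Sym2 V)) with hH
  have hadj : ∀ v w : V, H.Adj v w ↔ s(v, w) ∈ S ∧ v ≠ w := by
    intro v w; simp [hH, SimpleGraph.fromEdgeSet_adj]
  have e : (H.ConnectedComponent → Fin k) ≃ {c : V → Fin k // ∀ e ∈ S, (e.map c).IsDiag} :=
    { toFun := fun f => ⟨fun v => f (H.connectedComponentMk v), by
        intro e he
        induction e with
        | _ v w =>
          have hvw : v ≠ w := by
            intro h; exact hS _ he (by simp [h])
          have : H.Adj v w := (hadj v w).2 ⟨he, hvw⟩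
          simpa [Sym2.map_pair_eq] using
            congrArg f (SimpleGraph.ConnectedComponent.connectedComponentMk_eq_of_adj this)⟩
      invFun := fun c => SimpleGraph.ConnectedComponent.lift c.1 (by
        intro v w p _
        refine const_of_walk ?_ v w p
        intro a b hab
        have hmem : s(a, b) ∈ S := ((hadj a b).1 hab).1
        have := c.2 _ hmem
        simpa [Sym2.map_pair_eq] using this)
      left_inv := by
        intro f
        funext x
        refine SimpleGraph.ConnectedComponent.ind (fun v => ?_) x
        simp
      right_inv := by
        intro c
        ext v
        simp }
  have hfin : Finite H.ConnectedComponent :=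
    Finite.of_surjective H.connectedComponentMk Quot.mk_surjective
  rw [← Nat.card_congr e, Nat.card_fun, Nat.card_eq_fintype_card (α := Fin k), Fintype.card_fin]

theorem chromatic_is_polynomial' {V : Type*} [Fintype V] (G : SimpleGraph V) :
    ∃ p : Polynomial ℤ, ∀ k : ℕ,
      ((Nat.card {c : V → Fin k // ∀ v w : V, G.Adj v w → c v ≠ c w}) : ℤ) = p.eval (k : ℤ) := by
  classical
  have : Fintype G.edgeSet := Set.Finite.fintype (Set.toFinite _)
  set E := G.edgeFinset with hE
  set comps : Finset (Sym2 V) → ℕ :=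
    fun S => Nat.card (SimpleGraph.fromEdgeSet (S : Set (Sym2 V))).ConnectedComponent with hcomps
  refine ⟨∑ S ∈ E.powerset, Polynomial.C ((-1 : ℤ) ^ S.card) * Polynomial.X ^ comps S, ?_⟩
  intro k
  rw [Polynomial.eval_finset_sum]
  simp only [Polynomial.eval_mul, Polynomial.eval_pow, Polynomial.eval_C, Polynomial.eval_X]
  -- the monochromatic-edge finset of a coloring
  set M : (V → Fin k) → Finset (Sym2 V) := fun c => E.filter (fun e => (e.map c).IsDiag) with hM
  -- Step 1: proper count as a boolean sum
  have hprop : ((Nat.card {c : V → Fin k // ∀ v w : V, G.Adj v w → c v ≠ c w}) : ℤ)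
      = ∑ c : V → Fin k, (if M c = ∅ then (1 : ℤ) else 0) := by
    have hiff : ∀ c : V → Fin k, (M c = ∅) ↔ (∀ v w : V, G.Adj v w → c v ≠ c w) := by
      intro c
      rw [Finset.filter_eq_empty_iff]
      constructor
      · intro h v w hvw hc
        have hmem : s(v, w) ∈ E := by
          rw [hE, SimpleGraph.mem_edgeFinset, SimpleGraph.mem_edgeSet]; exact hvw
        exact h hmem (by simp [Sym2.map_pair_eq, hc])
      · intro h e he
        induction e with
        | _ v w =>
          have : G.Adj v w := by
            have := he
            rwa [hE, SimpleGraph.mem_edgeFinset, SimpleGraph.mem_edgeSet] at this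
          simp [Sym2.map_pair_eq, h v w this]
    rw [Finset.sum_boole]
    rw [Nat.card_eq_fintype_card, Fintype.card_subtype]
    norm_cast
    congr 1
    ext c
    simp [hiff c]
  rw [hprop]
  -- Step 2: inclusion-exclusion
  have hstep : ∀ c : V → Fin k, (if M c = ∅ then (1 : ℤ) else 0)
      = ∑ S ∈ E.powerset, (if S ⊆ M c then (-1 : ℤ) ^ S.card else 0) := by
    intro c
    calc (if M c = ∅ then (1 : ℤ) else 0)
        = ∑ m ∈ (M c).powerset, (-1 : ℤ) ^ m.card :=
          (Finset.sum_powerset_neg_one_pow_card (x := M c)).symm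
      _ = ∑ S ∈ E.powerset.filter (fun S => S ⊆ M c), (-1 : ℤ) ^ S.card := by
          congr 1
          ext S
          simp only [Finset.mem_filter, Finset.mem_powerset]
          constructor
          · intro h; exact ⟨h.trans (Finset.filter_subset _ _), h⟩
          · rintro ⟨-, h2⟩; exact h2
      _ = ∑ S ∈ E.powerset, (if S ⊆ M c then (-1 : ℤ) ^ S.card else 0) :=
          Finset.sum_filter _ _
  simp_rw [hstep]
  rw [Finset.sum_comm]
  refine Finset.sum_congr rfl ?_
  intro S hS
  rw [Finset.mem_powerset] at hS
  have hSE : ∀ e ∈ S, ¬ e.IsDiag := by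
    intro e he
    have : e ∈ G.edgeSet := by
      have := hS he; rwa [hE, SimpleGraph.mem_edgeFinset] at this
    exact G.not_isDiag_of_mem_edgeSet this
  have hsub : ∀ c : V → Fin k, (S ⊆ M c) ↔ (∀ e ∈ S, (e.map c).IsDiag) := by
    intro c
    constructor
    · intro h e he
      exact (Finset.mem_filter.1 (h he)).2
    · intro h e he
      exact Finset.mem_filter.2 ⟨hS he, h e he⟩
  calc ∑ c : V → Fin k, (if S ⊆ M c then (-1 : ℤ) ^ S.card else 0)
      = ∑ c : V → Fin k, ((-1 : ℤ) ^ S.card) * (if (∀ e ∈ S, (e.map c).IsDiag) then 1 else 0) := by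
        refine Finset.sum_congr rfl fun c _ => ?_
        simp only [hsub c]
        split <;> simp
    _ = ((-1 : ℤ) ^ S.card) * ∑ c : V → Fin k, (if (∀ e ∈ S, (e.map c).IsDiag) then (1:ℤ) else 0) := by
        rw [Finset.mul_sum]
    _ = ((-1 : ℤ) ^ S.card) * (k : ℤ) ^ comps S := by
        congr 1
        rw [Finset.sum_boole]
        have h2 := card_mono_colorings (V := V) k S hSE
        rw [Nat.card_eq_fintype_card, Fintype.card_subtype] at h2
        norm_cast


/-- The counting function `λ ↦ P_G(λ)` agrees with a polynomial with integer
coefficients. -/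
theorem chromatic_is_polynomial {V : Type*} [Fintype V] (G : SimpleGraph V) :
    ∃ p : Polynomial ℤ, ∀ k : ℕ, (properCount G k : ℤ) = p.eval (k : ℤ) := by
  obtain ⟨p, hp⟩ := chromatic_is_polynomial' G
  exact ⟨p, fun k => by simpa [properCount] using hp k⟩
end

section
/- Adding two distinct edges e, f to an enhanced state in the two possible orders yields results differing by sign under the sign convention (-1)^{n(·)}: for an enhanced state S and distinct edges e, f not in S, the signed double additions satisfy (-1)^{n(e)}(-1)^{n'(f)}(S ∪ e ∪ f) = -(-1)^{n(f)}(-1)^{n''(e)}(S ∪ f ∪ e), where n(·) counts earlier edges in the current edge set. -/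
lemma sign_anticomm_aux {α : Type*} [LinearOrder α] (s : Finset α) (e f : α)
    (he : e ∉ s) (hf : f ∉ s) (hef : e < f) :
    (-1 : ℤ) ^ (s.filter (· < e)).card *
        (-1 : ℤ) ^ ((insert e s).filter (· < f)).card =
      -((-1 : ℤ) ^ (s.filter (· < f)).card *
        (-1 : ℤ) ^ ((insert f s).filter (· < e)).card) := by
  rw [Finset.filter_insert, Finset.filter_insert, if_pos hef, if_neg (not_lt.mpr hef.le),
    Finset.card_insert_of_notMem (by simp [he])]
  ring

/-- Anti-commutativity of the signs in the chromatic differential: for a fixed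
linear order on the edges, adding two distinct edges `e, f ∉ s` in the two
possible orders produces signs `(-1)^{n(e)}·(-1)^{n'(f)}` and
`(-1)^{n(f)}·(-1)^{n''(e)}` that are opposite, where `n(·)` counts the edges of
the current edge set preceding the given edge. -/
theorem sign_anticomm {α : Type*} [LinearOrder α] (s : Finset α) (e f : α)
    (he : e ∉ s) (hf : f ∉ s) (hef : e ≠ f) :
    (-1 : ℤ) ^ (s.filter (· < e)).card *
        (-1 : ℤ) ^ ((insert e s).filter (· < f)).card =
      -((-1 : ℤ) ^ (s.filter (· < f)).card *
        (-1 : ℤ) ^ ((insert f s).filter (· < e)).card) := by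
  rcases hef.lt_or_gt with h | h
  · exact sign_anticomm_aux s e f he hf h
  · have := sign_anticomm_aux s f e hf he h
    linarith
end
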